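/- Suppose P_{ST} and P_{S'T'R'} are finitely-supported distributions such that P_T(t*) = α > 0, P_{S|T=t*} = P_S, and ‖P_{ST} − P_{S'T'}‖₁ ≤ α. Then ‖P_{S'T'R'} − P_{ST}·P_{R'|T'=t*}‖₁ ≤ (2/α)·(‖P_{S'T'R'} − P_{T'R'}·P_{S|T}‖₁ + ‖P_{S'T'R'} − P_{S'R'}·P_{T|S}‖₁) + (5/α)·‖P_{S'T'} − P_{ST}‖₁. -/

import Mathlib

/-!
Write `A` and `B` for the two conditional distances on the right and `D = ‖Q_{ST} − P‖₁`.
Replacing `Q` by `Q_{SR} · P_{T|S}` costs `B` and leaves the distance from the marginal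
`Q_{SR}` to `P_S ⊗ Q_{R|T=t*}`. Multiplied by `α`, this distance splits through the slice
`Q(·, t*, ·)`: the anchor `P_{S|T=t*} = P_S` says `P_{T|S}(t* | s) = α`, so the `t*`-slice of `B`
controls `Q(s, t*, r) − α Q_{SR}(s, r)`, and the `t*`-slice of `A` controls
`Q(s, t*, r) − P_S(s) Q_{TR}(t*, r)`. Normalising `Q_{TR}(t*, ·)` costs `|Q_T(t*) − α| ≤ D`.
-/

open Finset

section

variable {S T R : Type*} [Fintype S] [Fintype T] [Fintype R]

theorem sum_apply_le_sum_sum (f : S → T → ℝ) (hf : ∀ s t, 0 ≤ f s t) (t₀ : T) :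
    ∑ s, f s t₀ ≤ ∑ s, ∑ t, f s t :=
  sum_le_sum fun s _ => single_le_sum (fun t _ => hf s t) (mem_univ t₀)

theorem abs_sub_mul_le_abs_sub_mul_div_add {x q p m n : ℝ} (hp : 0 ≤ p) (hm : 0 ≤ m)
    (hpm : m = 0 → p = 0) :
    |x - p * n| ≤ |x - q * (p / m)| + p / m * |q - m * n| := by
  rcases eq_or_ne m 0 with rfl | hm0
  · simp [hpm rfl]
  calc |x - p * n| = |(x - q * (p / m)) + p / m * (q - m * n)| := by
        congr 1; field_simp; ring
    _ ≤ |x - q * (p / m)| + |p / m * (q - m * n)| := abs_add_le _ _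
    _ = _ := by rw [abs_mul, abs_of_nonneg (div_nonneg hp hm)]

theorem sum_abs_sub_mul_le_sum_abs_sub_cond_add (Q : S × T × R → ℝ) (P : S × T → ℝ)
    (N : R → ℝ) (hP : ∀ p, 0 ≤ P p) :
    ∑ s, ∑ t, ∑ r, |Q (s, t, r) - P (s, t) * N r|
      ≤ ∑ s, ∑ t, ∑ r, |Q (s, t, r) - (∑ t', Q (s, t', r)) * (P (s, t) / ∑ t', P (s, t'))|
        + ∑ s, ∑ r, |∑ t, Q (s, t, r) - (∑ t, P (s, t)) * N r| := by
  rw [← sum_add_distrib]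
  refine sum_le_sum fun s _ => ?_
  set m := ∑ t, P (s, t)
  have hm : 0 ≤ m := sum_nonneg fun t _ => hP _
  have hpm : m = 0 → ∀ t, P (s, t) = 0 := fun h t =>
    (sum_eq_zero_iff_of_nonneg fun t _ => hP _).mp h t (mem_univ t)
  have hw : ∑ t, P (s, t) / m ≤ 1 := by rw [← sum_div]; exact div_self_le_one m
  calc ∑ t, ∑ r, |Q (s, t, r) - P (s, t) * N r|
      ≤ ∑ t, ∑ r, (|Q (s, t, r) - (∑ t', Q (s, t', r)) * (P (s, t) / m)|
          + P (s, t) / m * |∑ t', Q (s, t', r) - m * N r|) :=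
        sum_le_sum fun t _ => sum_le_sum fun r _ =>
          abs_sub_mul_le_abs_sub_mul_div_add (hP _) hm fun h => hpm h t
    _ = ∑ t, ∑ r, |Q (s, t, r) - (∑ t', Q (s, t', r)) * (P (s, t) / m)|
          + (∑ t, P (s, t) / m) * ∑ r, |∑ t', Q (s, t', r) - m * N r| := by
        rw [sum_mul, ← sum_add_distrib]
        exact sum_congr rfl fun t _ => by rw [sum_add_distrib, mul_sum]
    _ ≤ _ := add_le_add le_rfl (mul_le_of_le_one_left (sum_nonneg fun r _ => abs_nonneg _) hw)

theorem mul_sum_abs_sub_mul_div_sum_le (u : S → R → ℝ) (m : S → ℝ) (v : R → ℝ) {a : ℝ}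
    (ha : 0 ≤ a) (hm : ∀ s, 0 ≤ m s) (hv : ∀ r, 0 ≤ v r) :
    a * ∑ s, ∑ r, |u s r - m s * (v r / ∑ r', v r')|
      ≤ ∑ s, ∑ r, |a * u s r - m s * v r| + (∑ s, m s) * |∑ r, v r - a| := by
  set β := ∑ r, v r
  have hβ : 0 ≤ β := sum_nonneg fun r _ => hv r
  have hvβ : ∀ r, v r / β * β = v r := fun r => div_mul_cancel_of_imp fun h =>
    (sum_eq_zero_iff_of_nonneg fun r _ => hv r).mp h r (mem_univ r)
  have hw : ∑ r, v r / β ≤ 1 := by rw [← sum_div]; exact div_self_le_one β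
  have key : ∀ s r, a * |u s r - m s * (v r / β)|
      ≤ |a * u s r - m s * v r| + m s * |β - a| * (v r / β) := by
    intro s r
    calc a * |u s r - m s * (v r / β)|
        = |(a * u s r - m s * v r) + m s * (β - a) * (v r / β)| := by
          rw [← abs_of_nonneg ha, ← abs_mul, abs_of_nonneg ha]
          congr 1
          linear_combination -(m s) * hvβ r
      _ ≤ _ := (abs_add_le _ _).trans_eq <| by
          rw [abs_mul, abs_mul, abs_of_nonneg (hm s), abs_of_nonneg (div_nonneg (hv r) hβ)]
  calc a * ∑ s, ∑ r, |u s r - m s * (v r / β)|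
      ≤ ∑ s, ∑ r, (|a * u s r - m s * v r| + m s * |β - a| * (v r / β)) := by
        rw [mul_sum]
        exact sum_le_sum fun s _ => (mul_sum _ _ _).trans_le (sum_le_sum fun r _ => key s r)
    _ = ∑ s, ∑ r, |a * u s r - m s * v r| + (∑ s, m s) * |β - a| * ∑ r, v r / β := by
        simp only [sum_add_distrib, ← mul_sum, ← sum_mul]
    _ ≤ _ := add_le_add le_rfl (mul_le_of_le_one_right
        (mul_nonneg (sum_nonneg fun s _ => hm s) (abs_nonneg _)) hw)

theorem sum_abs_sub_mul_sum_le_of_anchor (q : T → R → ℝ) (p : T → ℝ) (t₀ : T) {a : ℝ}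
    (ha : 0 ≤ a) (hq : ∀ t r, 0 ≤ q t r) (hanchor : p t₀ = (∑ t, p t) * a) :
    ∑ r, |q t₀ r - a * ∑ t, q t r|
      ≤ ∑ r, |q t₀ r - (∑ t, q t r) * (p t₀ / ∑ t, p t)| + a * ∑ t, |∑ r, q t r - p t| := by
  rcases eq_or_ne (∑ t, p t) 0 with h0 | h0
  -- here `p t₀ / 0 = 0`, and the cost `a * ∑ t, q t r` is paid by `∑ t, |∑ r, q t r - p t|`
  · calc ∑ r, |q t₀ r - a * ∑ t, q t r|
        ≤ ∑ r, (|q t₀ r| + a * ∑ t, q t r) := sum_le_sum fun r _ => (abs_sub _ _).trans_eq <| by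
          rw [abs_of_nonneg (mul_nonneg ha (sum_nonneg fun t _ => hq t r))]
      _ = ∑ r, |q t₀ r - (∑ t, q t r) * (p t₀ / ∑ t, p t)| + a * ∑ t, (∑ r, q t r - p t) := by
        rw [sum_add_distrib, ← mul_sum, sum_comm, sum_sub_distrib, h0]
        simp
      _ ≤ _ := by gcongr; exact le_abs_self _
  · have hcond : p t₀ / ∑ t, p t = a := by rw [hanchor, mul_div_cancel_left₀ _ h0]
    rw [hcond]
    exact le_add_of_le_of_nonneg (sum_congr rfl fun r _ => by rw [mul_comm]).le
      (mul_nonneg ha (sum_nonneg fun t _ => abs_nonneg _))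

theorem sum_abs_sub_mul_marginal_le (Q : S × T × R → ℝ) (P : S × T → ℝ) (hQ : ∀ q, 0 ≤ Q q)
    (t₀ : T) {α : ℝ} (hα : 0 < α) (hanchor : ∀ s, P (s, t₀) / α = ∑ t, P (s, t)) :
    ∑ s, ∑ r, |Q (s, t₀, r) - α * ∑ t, Q (s, t, r)|
      ≤ ∑ s, ∑ t, ∑ r, |Q (s, t, r) - (∑ t', Q (s, t', r)) * (P (s, t) / ∑ t', P (s, t'))|
        + α * ∑ s, ∑ t, |(∑ r, Q (s, t, r)) - P (s, t)| := by
  calc _ ≤ ∑ s, (∑ r, |Q (s, t₀, r) - (∑ t', Q (s, t', r)) * (P (s, t₀) / ∑ t', P (s, t'))|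
          + α * ∑ t, |(∑ r, Q (s, t, r)) - P (s, t)|) :=
        sum_le_sum fun s _ => sum_abs_sub_mul_sum_le_of_anchor (fun t r => Q (s, t, r))
          (fun t => P (s, t)) t₀ hα.le (fun t r => hQ _) ((div_eq_iff hα.ne').mp (hanchor s))
    _ ≤ _ := by
        rw [sum_add_distrib, ← mul_sum]
        exact add_le_add (sum_apply_le_sum_sum
          (fun s t => ∑ r, |Q (s, t, r) - (∑ t', Q (s, t', r)) * (P (s, t) / ∑ t', P (s, t'))|)
          (fun s t => sum_nonneg fun r _ => abs_nonneg _) t₀) le_rfl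

theorem sum_abs_sub_marginal_mul_le (Q : S × T × R → ℝ) (P : S × T → ℝ) (t₀ : T) {α : ℝ}
    (hPT : ∑ s, P (s, t₀) = α) (hanchor : ∀ s, P (s, t₀) / α = ∑ t, P (s, t)) :
    ∑ s, ∑ r, |Q (s, t₀, r) - (∑ s', Q (s', t₀, r)) * ∑ t, P (s, t)|
      ≤ ∑ s, ∑ t, ∑ r, |Q (s, t, r) - (∑ s', Q (s', t, r)) * (P (s, t) / ∑ s', P (s', t))| := by
  calc _ = ∑ s, ∑ r, |Q (s, t₀, r) - (∑ s', Q (s', t₀, r)) * (P (s, t₀) / ∑ s', P (s', t₀))| := by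
        simp only [hPT, hanchor]
    _ ≤ _ := sum_apply_le_sum_sum
        (fun s t => ∑ r, |Q (s, t, r) - (∑ s', Q (s', t, r)) * (P (s, t) / ∑ s', P (s', t))|)
        (fun s t => sum_nonneg fun r _ => abs_nonneg _) t₀

theorem mul_sum_abs_marginal_sub_le (Q : S × T × R → ℝ) (P : S × T → ℝ) (hQ : ∀ q, 0 ≤ Q q)
    (hP : ∀ p, 0 ≤ P p) (hP1 : ∑ s, ∑ t, P (s, t) = 1) (t₀ : T) {α : ℝ} (hα : 0 < α)
    (hPT : ∑ s, P (s, t₀) = α) (hanchor : ∀ s, P (s, t₀) / α = ∑ t, P (s, t)) :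
    α * ∑ s, ∑ r, |∑ t, Q (s, t, r)
        - (∑ t, P (s, t)) * ((∑ s', Q (s', t₀, r)) / ∑ s', ∑ r', Q (s', t₀, r'))|
      ≤ ∑ s, ∑ t, ∑ r, |Q (s, t, r) - (∑ s', Q (s', t, r)) * (P (s, t) / ∑ s', P (s', t))|
        + ∑ s, ∑ t, ∑ r, |Q (s, t, r) - (∑ t', Q (s, t', r)) * (P (s, t) / ∑ t', P (s, t'))|
        + (1 + α) * ∑ s, ∑ t, |(∑ r, Q (s, t, r)) - P (s, t)| := by
  have hβ : |∑ r, ∑ s, Q (s, t₀, r) - α| ≤ ∑ s, ∑ t, |(∑ r, Q (s, t, r)) - P (s, t)| := by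
    rw [sum_comm, ← hPT, ← sum_sub_distrib]
    exact (abs_sum_le_sum_abs _ _).trans
      (sum_apply_le_sum_sum (fun s t => |(∑ r, Q (s, t, r)) - P (s, t)|)
        (fun _ _ => abs_nonneg _) t₀)
  have hcross : ∑ s, ∑ r, |α * ∑ t, Q (s, t, r) - (∑ t, P (s, t)) * ∑ s', Q (s', t₀, r)|
      ≤ ∑ s, ∑ r, |Q (s, t₀, r) - (∑ s', Q (s', t₀, r)) * ∑ t, P (s, t)|
        + ∑ s, ∑ r, |Q (s, t₀, r) - α * ∑ t, Q (s, t, r)| := by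
    simp only [← sum_add_distrib]
    refine sum_le_sum fun s _ => sum_le_sum fun r _ => ?_
    rw [add_comm, abs_sub_comm (Q _), mul_comm (∑ s', _)]
    exact abs_sub_le _ _ _
  rw [show ∑ s', ∑ r', Q (s', t₀, r') = ∑ r', ∑ s', Q (s', t₀, r') from sum_comm]
  calc _ ≤ _ := mul_sum_abs_sub_mul_div_sum_le (fun s r => ∑ t, Q (s, t, r))
        (fun s => ∑ t, P (s, t)) (fun r => ∑ s', Q (s', t₀, r)) hα.le
        (fun s => sum_nonneg fun t _ => hP _) (fun r => sum_nonneg fun s _ => hQ _)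
    _ ≤ _ := by
        rw [hP1, one_mul]
        linarith [sum_abs_sub_marginal_mul_le Q P t₀ hPT hanchor,
          sum_abs_sub_mul_marginal_le Q P hQ t₀ hα hanchor]

end

theorem add_div_le_two_div_mul_add_five_div_mul {a A B D : ℝ} (ha : 0 < a) (ha1 : a ≤ 1)
    (hA : 0 ≤ A) (hB : 0 ≤ B) (hD : 0 ≤ D) :
    B + (A + B + (1 + a) * D) / a ≤ 2 / a * (A + B) + 5 / a * D := by
  rw [div_mul_eq_mul_div, div_mul_eq_mul_div, ← add_div, add_div' _ _ _ ha.ne',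
    div_le_div_iff_of_pos_right ha]
  nlinarith

theorem anchored_conditioning_ii_general {S T R : Type*} [Fintype S] [Fintype T] [Fintype R]
    (P : S × T → ℝ) (Q : S × T × R → ℝ)
    (hP0 : ∀ p, 0 ≤ P p) (hP1 : ∑ p, P p = 1)
    (hQ0 : ∀ q, 0 ≤ Q q)
    (tstar : T) (α : ℝ) (hα : 0 < α)
    (hPT : ∑ s, P (s, tstar) = α)
    (hanchor : ∀ s, P (s, tstar) / α = ∑ t, P (s, t)) :
    ∑ s, ∑ t, ∑ r,
        |Q (s, t, r) - P (s, t) *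
            ((∑ s', Q (s', tstar, r)) / (∑ s', ∑ r', Q (s', tstar, r')))|
      ≤ (2 / α) *
          ((∑ s, ∑ t, ∑ r,
              |Q (s, t, r) - (∑ s', Q (s', t, r)) * (P (s, t) / ∑ s', P (s', t))|)
           + ∑ s, ∑ t, ∑ r,
              |Q (s, t, r) - (∑ t', Q (s, t', r)) * (P (s, t) / ∑ t', P (s, t'))|)
        + (5 / α) * ∑ s, ∑ t, |(∑ r, Q (s, t, r)) - P (s, t)| := by
  rw [Fintype.sum_prod_type] at hP1
  have hα1 : α ≤ 1 :=
    hPT ▸ hP1 ▸ sum_apply_le_sum_sum (fun s t => P (s, t)) (fun _ _ => hP0 _) tstar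
  calc _ ≤ _ := sum_abs_sub_mul_le_sum_abs_sub_cond_add Q P _ hP0
    _ ≤ _ := add_le_add le_rfl <|
        (le_div_iff₀' hα).mpr (mul_sum_abs_marginal_sub_le Q P hQ0 hP0 hP1 tstar hα hPT hanchor)
    _ ≤ _ := add_div_le_two_div_mul_add_five_div_mul hα hα1 (by positivity) (by positivity)
        (by positivity)

/-- Under the same hypotheses as the companion lemma
(`P_T(t*) = α > 0`, `P_{S|T=t*} = P_S`, `‖P_{ST} − P_{S'T'}‖₁ ≤ α`),
`‖P_{S'T'R'} − P_{ST}·P_{R'|T'=t*}‖₁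
  ≤ (2/α)(‖P_{S'T'R'} − P_{T'R'}·P_{S|T}‖₁ + ‖P_{S'T'R'} − P_{S'R'}·P_{T|S}‖₁)
    + (5/α)‖P_{S'T'} − P_{ST}‖₁`. -/
theorem anchored_conditioning_ii {S T R : Type*} [Fintype S] [Fintype T] [Fintype R]
    (P : S × T → ℝ) (Q : S × T × R → ℝ)
    (hP0 : ∀ p, 0 ≤ P p) (hP1 : ∑ p, P p = 1)
    (hQ0 : ∀ q, 0 ≤ Q q) (hQ1 : ∑ q, Q q = 1)
    (tstar : T) (α : ℝ) (hα : 0 < α)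
    (hPT : ∑ s, P (s, tstar) = α)
    (hanchor : ∀ s, P (s, tstar) / α = ∑ t, P (s, t))
    (hclose : ∑ s, ∑ t, |(∑ r, Q (s, t, r)) - P (s, t)| ≤ α) :
    ∑ s, ∑ t, ∑ r,
        |Q (s, t, r) - P (s, t) *
            ((∑ s', Q (s', tstar, r)) / (∑ s', ∑ r', Q (s', tstar, r')))|
      ≤ (2 / α) *
          ((∑ s, ∑ t, ∑ r,
              |Q (s, t, r) - (∑ s', Q (s', t, r)) * (P (s, t) / ∑ s', P (s', t))|)
           + ∑ s, ∑ t, ∑ r,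
              |Q (s, t, r) - (∑ t', Q (s, t', r)) * (P (s, t) / ∑ t', P (s, t'))|)
        + (5 / α) * ∑ s, ∑ t, |(∑ r, Q (s, t, r)) - P (s, t)| :=
  anchored_conditioning_ii_general P Q hP0 hP1 hQ0 tstar α hα hPT hanchor
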